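/- arXiv:2505.06235 — 2 statements merged into one kernel-verified Lean document; each statement's English description precedes it below -/
import Mathlib

section
/- Let I_A be the excenter of triangle ABC opposite vertex A, with exradius r_a, and let G be the centroid, K = diag(S_A, S_B, S_C). Then I_A K I_Aᵀ = 2r_a² and 3 G K I_Aᵀ = −2R r_a + 2r_a². -/
open scoped RealInnerProductSpace

noncomputable section

abbrev Pt := EuclideanSpace ℝ (Fin 2)

/-- Signed area of triangle XYZ in the plane. -/
def sArea (X Y Z : Pt) : ℝ :=
  ((Y 0 - X 0) * (Z 1 - X 1) - (Z 0 - X 0) * (Y 1 - X 1)) / 2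

/-- Conway symbol: `conwayA A B C = S_A = (b^2 + c^2 - a^2)/2`. -/
def conwayA (X Y Z : Pt) : ℝ :=
  (dist Z X ^ 2 + dist X Y ^ 2 - dist Y Z ^ 2) / 2

/-- The bilinear form given by the metric matrix K = diag (S_A, S_B, S_C). -/
def Kf (A B C : Pt) (u v : Fin 3 → ℝ) : ℝ :=
  conwayA A B C * u 0 * v 0 + conwayA B C A * u 1 * v 1 + conwayA C A B * u 2 * v 2

/-- The point with (normalized) barycentric coordinates `u` w.r.t. A, B, C. -/
def bary (A B C : Pt) (u : Fin 3 → ℝ) : Pt :=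
  u 0 • A + u 1 • B + u 2 • C

/-!
The excenter has unnormalized barycentric coordinates `(-a, b, c)`, with coordinate sum
`b + c - a = 2 (p - a)`, so both identities follow from bilinearity of `K` and two
computations with `(-a, b, c)`. Its `K`-norm `Σ S_A a²` equals `(2Σa²b² - Σa⁴) / 2 = 8 S²`
by Heron's formula, which also turns `-a S_A + b S_B + c S_C` into `-abc + 8 S² / (b + c - a)`;
finally `r_a = 2 S / (b + c - a)` and `2 R r_a = abc / (b + c - a)`.
-/

lemma dist_sq_eq_coord_sq (X Y : Pt) : dist X Y ^ 2 = (X 0 - Y 0) ^ 2 + (X 1 - Y 1) ^ 2 := by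
  rw [EuclideanSpace.dist_eq, Real.sq_sqrt (by positivity)]
  simp [Fin.sum_univ_two, Real.dist_eq, sq_abs]

theorem sixteen_mul_sArea_sq_eq_sides_sq (A B C : Pt) :
    16 * sArea A B C ^ 2 =
      2 * dist B C ^ 2 * dist C A ^ 2 + 2 * dist C A ^ 2 * dist A B ^ 2
        + 2 * dist A B ^ 2 * dist B C ^ 2
        - (dist B C ^ 2) ^ 2 - (dist C A ^ 2) ^ 2 - (dist A B ^ 2) ^ 2 := by
  simp only [dist_sq_eq_coord_sq, sArea]; ring

theorem sixteen_mul_sArea_sq (A B C : Pt) :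
    16 * sArea A B C ^ 2 =
      (dist B C + dist C A + dist A B) * (dist C A + dist A B - dist B C) *
        (dist A B + dist B C - dist C A) * (dist B C + dist C A - dist A B) := by
  linear_combination sixteen_mul_sArea_sq_eq_sides_sq A B C

lemma dist_add_dist_sub_dist_ne_zero {A B C : Pt} (h : sArea A B C ≠ 0) :
    dist C A + dist A B - dist B C ≠ 0 := by
  intro h0
  have heron := sixteen_mul_sArea_sq A B C
  rw [h0] at heron
  exact h (by simpa using heron)

lemma Kf_smul_left (A B C : Pt) (t : ℝ) (u v : Fin 3 → ℝ) :
    Kf A B C (t • u) v = t * Kf A B C u v := by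
  simp only [Kf, Pi.smul_apply, smul_eq_mul]; ring

lemma Kf_smul_right (A B C : Pt) (t : ℝ) (u v : Fin 3 → ℝ) :
    Kf A B C u (t • v) = t * Kf A B C u v := by
  simp only [Kf, Pi.smul_apply, smul_eq_mul]; ring

theorem Kf_neg_sides_self (A B C : Pt) :
    Kf A B C ![-dist B C, dist C A, dist A B] ![-dist B C, dist C A, dist A B] =
      8 * sArea A B C ^ 2 := by
  simp only [Kf, conwayA, Matrix.cons_val_zero, Matrix.cons_val_one, Matrix.cons_val_two,
    Matrix.head_cons, Matrix.tail_cons]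
  linear_combination -sixteen_mul_sArea_sq_eq_sides_sq A B C / 2

theorem Kf_ones_neg_sides (A B C : Pt) :
    Kf A B C ![1, 1, 1] ![-dist B C, dist C A, dist A B] =
      -(dist B C * dist C A * dist A B) +
        (dist B C + dist C A + dist A B) * (dist A B + dist B C - dist C A) *
          (dist B C + dist C A - dist A B) / 2 := by
  simp only [Kf, conwayA, Matrix.cons_val_zero, Matrix.cons_val_one, Matrix.cons_val_two,
    Matrix.head_cons, Matrix.tail_cons]
  ring

theorem stmt15 (A B C : Pt) (h : sArea A B C ≠ 0)
    (a b c S p ra R : ℝ) (ha : a = dist B C) (hb : b = dist C A) (hc : c = dist A B)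
    (hS : S = |sArea A B C|) (hp : p = (a + b + c) / 2) (hra : ra = S / (p - a))
    (hR : R = a * b * c / (4 * S))
    (Ia : Fin 3 → ℝ)
    (hIa : Ia = ![-a / (2 * (p - a)), b / (2 * (p - a)), c / (2 * (p - a))]) :
    Kf A B C Ia Ia = 2 * ra ^ 2 ∧
      Kf A B C ![1, 1, 1] Ia = -2 * R * ra + 2 * ra ^ 2 := by
  have hS0 : S ≠ 0 := hS ▸ abs_ne_zero.mpr h
  have hsa : b + c - a ≠ 0 := by subst ha hb hc; exact dist_add_dist_sub_dist_ne_zero h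
  have hheron : 16 * S ^ 2 = (a + b + c) * (b + c - a) * (c + a - b) * (a + b - c) := by
    rw [hS, sq_abs, ha, hb, hc]; exact sixteen_mul_sArea_sq A B C
  have hpa : p - a = (b + c - a) / 2 := by rw [hp]; ring
  have hIa' : Ia = (b + c - a)⁻¹ • ![-a, b, c] := by
    rw [hIa, hpa]; ext i; fin_cases i <;> simp <;> ring
  have hself : Kf A B C ![-a, b, c] ![-a, b, c] = 8 * S ^ 2 := by
    rw [hS, sq_abs, ha, hb, hc]; exact Kf_neg_sides_self A B C
  have hone : Kf A B C ![1, 1, 1] ![-a, b, c] =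
      -(a * b * c) + (a + b + c) * (c + a - b) * (a + b - c) / 2 := by
    rw [ha, hb, hc]; exact Kf_ones_neg_sides A B C
  subst hra hR
  rw [hIa', Kf_smul_left, Kf_smul_right, Kf_smul_right, hself, hone, hpa]
  constructor
  · field_simp; norm_num
  · field_simp; linear_combination -4 * hheron
end
end

section
/- Feuerbach's theorem: the nine-point circle of a triangle is internally tangent to the incircle and externally tangent to each excircle; precisely, |NI| = R/2 − r and |NI_A| = R/2 + r_a, where N is the nine-point center, I the incenter, I_A the excenter opposite A. -/
/-!
Measure everything from the circumcenter `O`. The orthocenter satisfies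
`H - O = (A - O) + (B - O) + (C - O)`, so `N - O` is half that sum, while a tritangent center is
the weighted mean of `A, B, C` with weights `(α, b, c)`, `α = ±a`. Lagrange's identity for
weighted means of points on a circle expresses `|NJ|²` through `ρ = |OA|` and the sides; with
`16 S² ρ² = a² b² c²` and Heron's formula it becomes a perfect square,
`64 σ² S² |NJ|² = (σ α b c - 16 S²)²` where `σ = α + b + c`. Taking `α = a` and `α = -a` gives
the two tangencies; the sign of `σ a b c - 16 S²` is Euler's inequality `R ≥ 2r`.
-/

open scoped RealInnerProductSpace

noncomputable section

section InnerProductSpace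

variable {V : Type*} [NormedAddCommGroup V] [InnerProductSpace ℝ V]

theorem norm_smul_add_smul_add_smul_sq (a b c : ℝ) (u v w : V) :
    ‖a • u + b • v + c • w‖ ^ 2 =
      (a + b + c) * (a * ‖u‖ ^ 2 + b * ‖v‖ ^ 2 + c * ‖w‖ ^ 2)
        - (a * b * ‖u - v‖ ^ 2 + b * c * ‖v - w‖ ^ 2 + c * a * ‖w - u‖ ^ 2) := by
  simp only [← real_inner_self_eq_norm_sq, inner_add_left, inner_add_right, inner_sub_left,
    inner_sub_right, real_inner_smul_left, real_inner_smul_right]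
  rw [real_inner_comm u v, real_inner_comm v w, real_inner_comm w u]
  ring

theorem inner_sub_sub_of_dist_eq {O A B : V} (h : dist O A = dist O B) :
    ⟪O - A, B - A⟫ = ‖B - A‖ ^ 2 / 2 := by
  have h2 : ‖O - B‖ ^ 2 = ‖O - A‖ ^ 2 := by rw [← dist_eq_norm, ← dist_eq_norm, h]
  rw [← sub_sub_sub_cancel_right O B A, norm_sub_sq_real] at h2
  linarith

theorem inner_add_sub_eq_zero_of_dist_eq {O B C : V} (h : dist O B = dist O C) :
    ⟪(C - O) + (B - O), C - B⟫ = 0 := by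
  rw [← sub_sub_sub_cancel_right C B O, real_inner_add_sub_eq_zero_iff, ← dist_eq_norm,
    ← dist_eq_norm, dist_comm C, dist_comm B, h]

theorem smul_midpoint_sub_weighted_eq {A B C O H : V}
    (hH : H - O = (A - O) + (B - O) + (C - O)) {α β γ : ℝ} (hσ : α + β + γ ≠ 0) :
    (2 * (α + β + γ)) • (midpoint ℝ O H - (α + β + γ)⁻¹ • (α • A + β • B + γ • C)) =
      (β + γ - α) • (A - O) + (γ + α - β) • (B - O) + (α + β - γ) • (C - O) := by
  have hJ := smul_inv_smul₀ hσ (α • A + β • B + γ • C)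
  have hN : (2 : ℝ) • midpoint ℝ O H = O + H := by
    rw [midpoint_eq_smul_add, smul_smul]; norm_num
  linear_combination (norm := module) (α + β + γ) • hN - (2 : ℝ) • hJ + (α + β + γ) • hH

theorem dist_midpoint_weighted_sq {A B C O H : V} {ρ : ℝ}
    (hA : dist O A = ρ) (hB : dist O B = ρ) (hC : dist O C = ρ)
    (hH : H - O = (A - O) + (B - O) + (C - O)) {α β γ : ℝ} (hσ : α + β + γ ≠ 0) :
    4 * (α + β + γ) ^ 2
        * dist (midpoint ℝ O H) ((α + β + γ)⁻¹ • (α • A + β • B + γ • C)) ^ 2 =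
      (α + β + γ) ^ 2 * ρ ^ 2
        - ((β + γ - α) * (γ + α - β) * dist A B ^ 2 + (γ + α - β) * (α + β - γ) * dist B C ^ 2
          + (α + β - γ) * (β + γ - α) * dist C A ^ 2) := by
  have key := congrArg (‖·‖ ^ 2) (smul_midpoint_sub_weighted_eq hH hσ)
  simp only [norm_smul_add_smul_add_smul_sq, norm_smul, mul_pow, Real.norm_eq_abs, sq_abs,
    sub_sub_sub_cancel_right, ← dist_eq_norm, dist_comm _ O, hA, hB, hC] at key
  linear_combination key

end InnerProductSpace

def cross (x y : Pt) : ℝ := x 0 * y 1 - x 1 * y 0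

lemma Pt.norm_sq_eq (x : Pt) : ‖x‖ ^ 2 = x 0 ^ 2 + x 1 ^ 2 := by
  simp [EuclideanSpace.real_norm_sq_eq, Fin.sum_univ_two]

lemma Pt.inner_eq (x y : Pt) : ⟪x, y⟫ = x 0 * y 0 + x 1 * y 1 := by
  simp [PiLp.inner_apply, Fin.sum_univ_two]; ring

lemma cross_sq (x y : Pt) : cross x y ^ 2 = ‖x‖ ^ 2 * ‖y‖ ^ 2 - ⟪x, y⟫ ^ 2 := by
  simp only [Pt.norm_sq_eq, Pt.inner_eq, cross]; ring

lemma cross_sq_mul_norm_sq (x y z : Pt) :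
    cross x y ^ 2 * ‖z‖ ^ 2 = ‖⟪z, x⟫ • y - ⟪z, y⟫ • x‖ ^ 2 := by
  simp only [Pt.norm_sq_eq, Pt.inner_eq, cross, PiLp.sub_apply, PiLp.smul_apply, smul_eq_mul]
  ring

lemma eq_zero_of_inner_eq_zero_of_cross_ne_zero {x y z : Pt} (hxy : cross x y ≠ 0)
    (hx : ⟪z, x⟫ = 0) (hy : ⟪z, y⟫ = 0) : z = 0 := by
  have h := cross_sq_mul_norm_sq x y z
  rw [hx, hy, zero_smul, zero_smul, sub_zero, norm_zero, zero_pow two_ne_zero] at h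
  simpa [hxy] using h

lemma sArea_eq_cross (A B C : Pt) : sArea A B C = cross (B - A) (C - A) / 2 := by
  simp only [sArea, cross, PiLp.sub_apply]; ring

lemma sArea_eq_cross_sub_sub (A B C : Pt) : sArea A B C = cross (C - B) (A - C) / 2 := by
  simp only [sArea, cross, PiLp.sub_apply]; ring

lemma sArea_sq (A B C : Pt) :
    16 * sArea A B C ^ 2 =
      4 * dist A B ^ 2 * dist C A ^ 2 - (dist A B ^ 2 + dist C A ^ 2 - dist B C ^ 2) ^ 2 := by
  have hBC : dist B C ^ 2 = ‖B - A‖ ^ 2 - 2 * ⟪B - A, C - A⟫ + ‖C - A‖ ^ 2 := by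
    rw [dist_eq_norm, ← norm_sub_sq_real, sub_sub_sub_cancel_right]
  rw [sArea_eq_cross, hBC, dist_comm A B, dist_eq_norm B A, dist_eq_norm C A]
  linear_combination 4 * cross_sq (B - A) (C - A)

lemma sArea_sq_eq_heron (A B C : Pt) :
    16 * sArea A B C ^ 2 =
      (dist B C + dist C A + dist A B) * (-dist B C + dist C A + dist A B)
        * (dist B C - dist C A + dist A B) * (dist B C + dist C A - dist A B) := by
  rw [sArea_sq]; ring

lemma dist_lt_dist_add_dist_of_sArea_ne_zero {A B C : Pt} (h : sArea A B C ≠ 0) :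
    dist B C < dist C A + dist A B := by
  have htri := dist_triangle B A C
  rw [dist_comm B A, dist_comm A C, add_comm] at htri
  refine htri.lt_of_ne fun heq => h ?_
  have := sArea_sq_eq_heron A B C
  rw [heq] at this
  simpa using this

lemma sub_mul_sub_mul_sub_le_mul_mul {a b c : ℝ} (ha : 0 ≤ -a + b + c) (hb : 0 ≤ a - b + c)
    (hc : 0 ≤ a + b - c) : (-a + b + c) * (a - b + c) * (a + b - c) ≤ a * b * c := by
  nlinarith [mul_nonneg ha (sq_nonneg (b - c)), mul_nonneg hb (sq_nonneg (c - a)),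
    mul_nonneg hc (sq_nonneg (a - b))]

lemma sixteen_mul_sArea_sq_le (A B C : Pt) :
    16 * sArea A B C ^ 2 ≤ (dist B C + dist C A + dist A B) * (dist B C * dist C A * dist A B) := by
  have ha := dist_triangle B A C
  have hb := dist_triangle C B A
  have hc := dist_triangle A C B
  rw [dist_comm B A, dist_comm A C] at ha
  rw [dist_comm C B, dist_comm B A] at hb
  rw [dist_comm A C, dist_comm C B] at hc
  rw [sArea_sq_eq_heron, mul_assoc _ _ (dist B C - _ + _), mul_assoc]
  exact mul_le_mul_of_nonneg_left
    (sub_mul_sub_mul_sub_le_mul_mul (by linarith) (by linarith) (by linarith)) (by positivity)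

lemma sArea_sq_mul_dist_sq {A B C O : Pt} (hAB : dist O A = dist O B) (hAC : dist O A = dist O C) :
    16 * sArea A B C ^ 2 * dist O A ^ 2 = dist B C ^ 2 * dist C A ^ 2 * dist A B ^ 2 := by
  have hz := cross_sq_mul_norm_sq (B - A) (C - A) (O - A)
  have hBC : dist B C ^ 2 = ‖B - A‖ ^ 2 - 2 * ⟪B - A, C - A⟫ + ‖C - A‖ ^ 2 := by
    rw [dist_eq_norm, ← norm_sub_sq_real, sub_sub_sub_cancel_right]
  rw [inner_sub_sub_of_dist_eq hAB, inner_sub_sub_of_dist_eq hAC, ← dist_eq_norm O A,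
    norm_sub_sq_real, norm_smul, norm_smul, real_inner_smul_left, real_inner_smul_right,
    Real.norm_of_nonneg (by positivity), Real.norm_of_nonneg (by positivity),
    real_inner_comm] at hz
  rw [sArea_eq_cross, hBC, dist_comm A B, dist_eq_norm B A, dist_eq_norm C A]
  linear_combination 4 * hz

theorem orthocenter_sub_eq {A B C O H : Pt} (hABC : sArea A B C ≠ 0)
    (hAB : dist O A = dist O B) (hBC : dist O B = dist O C)
    (hH1 : ⟪H - A, C - B⟫ = 0) (hH2 : ⟪H - B, A - C⟫ = 0) :
    H - O = (A - O) + (B - O) + (C - O) := by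
  have hcross : cross (C - B) (A - C) ≠ 0 := by
    rw [sArea_eq_cross_sub_sub] at hABC; intro h; simp [h] at hABC
  have h1 : ⟪H - O - ((A - O) + (B - O) + (C - O)), C - B⟫ = 0 := by
    rw [show H - O - ((A - O) + (B - O) + (C - O)) = (H - A) - ((C - O) + (B - O)) by abel,
      inner_sub_left, hH1, inner_add_sub_eq_zero_of_dist_eq hBC, sub_zero]
  have h2 : ⟪H - O - ((A - O) + (B - O) + (C - O)), A - C⟫ = 0 := by
    rw [show H - O - ((A - O) + (B - O) + (C - O)) = (H - B) - ((A - O) + (C - O)) by abel,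
      inner_sub_left, hH2, inner_add_sub_eq_zero_of_dist_eq (hAB.trans hBC).symm, sub_zero]
  exact sub_eq_zero.1 (eq_zero_of_inner_eq_zero_of_cross_ne_zero hcross h1 h2)

/- Only `α ^ 2` enters, so `α = a` (incenter) and `α = -a` (excenter) are treated at once. -/
theorem sArea_sq_mul_dist_midpoint_weighted_sq {A B C O H : Pt}
    (hAB : dist O A = dist O B) (hBC : dist O B = dist O C)
    (hH : H - O = (A - O) + (B - O) + (C - O)) {α β γ : ℝ} (hσ : α + β + γ ≠ 0)
    (hα : dist B C ^ 2 = α ^ 2) (hβ : dist C A ^ 2 = β ^ 2) (hγ : dist A B ^ 2 = γ ^ 2) :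
    64 * (α + β + γ) ^ 2 * sArea A B C ^ 2
        * dist (midpoint ℝ O H) ((α + β + γ)⁻¹ • (α • A + β • B + γ • C)) ^ 2 =
      ((α + β + γ) * α * β * γ - 16 * sArea A B C ^ 2) ^ 2 := by
  have hd := dist_midpoint_weighted_sq rfl hAB.symm (hAB.trans hBC).symm hH hσ
  have heron := sArea_sq A B C
  have hcirc := sArea_sq_mul_dist_sq hAB (hAB.trans hBC)
  rw [hα, hβ, hγ] at hd heron hcirc
  linear_combination 16 * sArea A B C ^ 2 * hd + (α + β + γ) ^ 2 * hcirc
    - 16 * sArea A B C ^ 2 * heron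

lemma eq_div_of_sq_mul_sq_eq_sq {k d X : ℝ} (hk : 0 < k) (hd : 0 ≤ d) (hX : 0 ≤ X)
    (h : k ^ 2 * d ^ 2 = X ^ 2) : d = X / k := by
  rw [eq_div_iff hk.ne', mul_comm, ← sq_eq_sq₀ (by positivity) hX, mul_pow, h]

theorem stmt19_general (A B C O Hpt : Pt) (h : sArea A B C ≠ 0)
    (hO : dist O A = dist O B ∧ dist O B = dist O C)
    (hH1 : ⟪Hpt - A, C - B⟫ = 0) (hH2 : ⟪Hpt - B, A - C⟫ = 0)
    (N : Pt) (hN : N = midpoint ℝ O Hpt)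
    (a b c S p r ra R : ℝ) (ha : a = dist B C) (hb : b = dist C A)
    (hc : c = dist A B) (hS : S = |sArea A B C|) (hp : p = (a + b + c) / 2)
    (hr : r = S / p) (hra : ra = S / (p - a)) (hR : R = a * b * c / (4 * S))
    (I : Pt) (hI : I = (a + b + c)⁻¹ • (a • A + b • B + c • C))
    (Ia : Pt) (hIa : Ia = (-a + b + c)⁻¹ • ((-a) • A + b • B + c • C)) :
    dist N I = R / 2 - r ∧ dist N Ia = R / 2 + ra := by
  obtain ⟨hAB, hBC⟩ := hO
  have hH := orthocenter_sub_eq h hAB hBC hH1 hH2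
  have hS0 : 0 < S := hS ▸ abs_pos.2 h
  have hS2 : sArea A B C ^ 2 = S ^ 2 := hS ▸ (sq_abs _).symm
  have ha0 : 0 ≤ a := ha ▸ dist_nonneg
  have habc : 0 ≤ a * b * c := by rw [ha, hb, hc]; positivity
  have hσa : 0 < -a + b + c := by
    have := dist_lt_dist_add_dist_of_sArea_ne_zero h; rw [ha, hb, hc]; linarith
  have hσ : 0 < a + b + c := by linarith
  have hdI := sArea_sq_mul_dist_midpoint_weighted_sq hAB hBC hH hσ.ne' (by rw [ha]) (by rw [hb])
    (by rw [hc])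
  have hdIa := sArea_sq_mul_dist_midpoint_weighted_sq (α := -a) hAB hBC hH hσa.ne'
    (by rw [ha, neg_sq]) (by rw [hb]) (by rw [hc])
  rw [← hN, ← hI, hS2] at hdI
  rw [← hN, ← hIa, hS2] at hdIa
  constructor
  · have hX : 0 ≤ (a + b + c) * a * b * c - 16 * S ^ 2 := by
      have := sixteen_mul_sArea_sq_le A B C
      rw [hS2, ← ha, ← hb, ← hc] at this
      linarith
    rw [eq_div_of_sq_mul_sq_eq_sq (k := 8 * (a + b + c) * S) (by positivity) dist_nonneg hX
      (by linear_combination hdI), hR, hr, hp]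
    field_simp
    ring
  · rw [eq_div_of_sq_mul_sq_eq_sq (k := 8 * (-a + b + c) * S)
      (X := (-a + b + c) * a * b * c + 16 * S ^ 2) (by positivity) dist_nonneg
      (by nlinarith [mul_nonneg hσa.le habc]) (by linear_combination hdIa), hR, hra, hp,
      show (a + b + c) / 2 - a = (-a + b + c) / 2 by ring]
    field_simp
    ring

theorem stmt19 (A B C O Hpt : Pt) (h : sArea A B C ≠ 0)
    (hO : dist O A = dist O B ∧ dist O B = dist O C)
    (hH1 : ⟪Hpt - A, C - B⟫ = 0) (hH2 : ⟪Hpt - B, A - C⟫ = 0)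
    (hH3 : ⟪Hpt - C, B - A⟫ = 0)
    (N : Pt) (hN : N = midpoint ℝ O Hpt)
    (a b c S p r ra R : ℝ) (ha : a = dist B C) (hb : b = dist C A)
    (hc : c = dist A B) (hS : S = |sArea A B C|) (hp : p = (a + b + c) / 2)
    (hr : r = S / p) (hra : ra = S / (p - a)) (hR : R = a * b * c / (4 * S))
    (I : Pt) (hI : I = (a + b + c)⁻¹ • (a • A + b • B + c • C))
    (Ia : Pt) (hIa : Ia = (-a + b + c)⁻¹ • ((-a) • A + b • B + c • C)) :
    dist N I = R / 2 - r ∧ dist N Ia = R / 2 + ra :=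
  stmt19_general A B C O Hpt h hO hH1 hH2 N hN a b c S p r ra R ha hb hc hS hp hr hra hR I hI Ia hIa
end
end
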